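/- Let a_1, …, a_n be positive integers, let N = 18·(max_i a_i)·(∑_i a_i)³, and define p(x) = N·∑_{i=1}^n (x_i² − 1)² + (∑_{i=1}^n a_i x_i)² − 1/2. If x* ∈ ℝⁿ with x* ≠ 0 is a global minimum of p, then 1/6 ≤ |x_i*| ≤ 3/2 for every i = 1, …, n. -/
import Mathlib


open Finset

/-- The quartic polynomial function from the Partition reduction:
`p(x) = N·∑ᵢ (xᵢ² − 1)² + (∑ᵢ aᵢxᵢ)² − 1/2` with
`N = 18·(maxᵢ aᵢ)·(∑ᵢ aᵢ)³`. -/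
noncomputable def partitionPoly (n : ℕ) (a : Fin n → ℕ) (x : Fin n → ℝ) : ℝ :=
  ((18 * (Finset.univ.sup a) * (∑ i, a i) ^ 3 : ℕ) : ℝ) * (∑ i, ((x i) ^ 2 - 1) ^ 2) +
    (∑ i, (a i : ℝ) * x i) ^ 2 - 1 / 2

theorem partition_global_min_entries_bounded {n : ℕ} (a : Fin n → ℕ)
    (ha : ∀ i, 0 < a i) (xstar : Fin n → ℝ) (hne : xstar ≠ 0)
    (hmin : ∀ x : Fin n → ℝ, partitionPoly n a xstar ≤ partitionPoly n a x) :
    ∀ i, 1 / 6 ≤ |xstar i| ∧ |xstar i| ≤ 3 / 2 := by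
  intro i
  set S : ℕ := ∑ j, a j with hS
  set M : ℕ := Finset.univ.sup a with hM
  -- evaluate at the all-ones vector
  have h1 := hmin (fun _ => 1)
  have hval : partitionPoly n a (fun _ => 1) = (S : ℝ) ^ 2 - 1 / 2 := by
    simp [partitionPoly, hS]
  rw [hval] at h1
  unfold partitionPoly at h1
  -- bound the sum of squares
  have hNsum : ((18 * M * S ^ 3 : ℕ) : ℝ) * (∑ j, ((xstar j) ^ 2 - 1) ^ 2) ≤ (S : ℝ) ^ 2 := by
    nlinarith [sq_nonneg (∑ j, (a j : ℝ) * xstar j)]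
  have hterm : ((xstar i) ^ 2 - 1) ^ 2 ≤ ∑ j, ((xstar j) ^ 2 - 1) ^ 2 :=
    Finset.single_le_sum (f := fun j => ((xstar j) ^ 2 - 1) ^ 2) (fun j _ => sq_nonneg _) (Finset.mem_univ i)
  have hS1 : 1 ≤ S := le_trans (ha i) (Finset.single_le_sum (fun j _ => Nat.zero_le _) (Finset.mem_univ i))
  have hM1 : 1 ≤ M := le_trans (ha i) (Finset.le_sup (Finset.mem_univ i))
  have hN : 18 * S ^ 2 ≤ 18 * M * S ^ 3 := by
    calc 18 * S ^ 2 = 18 * 1 * (1 * S ^ 2) := by ring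
    _ ≤ 18 * M * (S * S ^ 2) := by
        apply Nat.mul_le_mul (Nat.mul_le_mul_left _ hM1) (Nat.mul_le_mul_right _ hS1)
    _ = 18 * M * S ^ 3 := by ring
  have hNr : (18 : ℝ) * (S : ℝ) ^ 2 ≤ ((18 * M * S ^ 3 : ℕ) : ℝ) := by
    have := (Nat.cast_le (α := ℝ)).2 hN
    push_cast at this ⊢
    linarith
  have hSr : (1 : ℝ) ≤ (S : ℝ) := by exact_mod_cast hS1
  have hsumnn : 0 ≤ ∑ j, ((xstar j) ^ 2 - 1) ^ 2 :=
    Finset.sum_nonneg fun j _ => sq_nonneg _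
  have hS2 : (1 : ℝ) ≤ (S : ℝ) ^ 2 := by nlinarith
  have hkey : ((xstar i) ^ 2 - 1) ^ 2 ≤ 1 / 18 := by
    have h2 : (18 : ℝ) * (S : ℝ) ^ 2 * ((xstar i) ^ 2 - 1) ^ 2 ≤ (S : ℝ) ^ 2 := by
      calc (18 : ℝ) * (S : ℝ) ^ 2 * ((xstar i) ^ 2 - 1) ^ 2
          ≤ ((18 * M * S ^ 3 : ℕ) : ℝ) * ((xstar i) ^ 2 - 1) ^ 2 :=
            mul_le_mul_of_nonneg_right hNr (sq_nonneg _)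
        _ ≤ ((18 * M * S ^ 3 : ℕ) : ℝ) * (∑ j, ((xstar j) ^ 2 - 1) ^ 2) := by
            apply mul_le_mul_of_nonneg_left hterm
            positivity
        _ ≤ (S : ℝ) ^ 2 := hNsum
    by_contra h
    push_neg at h
    have h3 := mul_lt_mul_of_pos_left h (show (0:ℝ) < 18 * (S : ℝ) ^ 2 by positivity)
    nlinarith
  clear h1 hmin hNsum hterm hsumnn hval hne hNr hN hS2 hSr hS1 hM1 ha
  have ht2u : (xstar i) ^ 2 ≤ 5 / 4 := by nlinarith

  have ht2l : 3 / 4 ≤ (xstar i) ^ 2 := by nlinarith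
  have habs : |xstar i| ^ 2 = (xstar i) ^ 2 := sq_abs _
  have hnn : 0 ≤ |xstar i| := abs_nonneg _
  constructor
  · nlinarith
  · nlinarith
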